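/- arXiv:2105.08850 — 6 statements merged into one kernel-verified Lean document; each statement's English description precedes it below -/
import Mathlib

section
/- In any graph G with no clique of size t (t ≥ 2) on n vertices, the probability that two vertices chosen independently and uniformly at random form an independent set (i.e., are not adjacent) is at least 1/(t-1). -/
/-!
An ordered pair of vertices is non-adjacent unless it is one of the `2e` darts of `G`, so there
are `n² - 2e` such pairs. A `K_{r+1}`-free graph has at most as many edges as the Turán graph
`T(n, r)`, so `2re ≤ (r - 1)n²` and hence `r (n² - 2e) ≥ n²`.
-/

open Finset Fintype

namespace SimpleGraph

variable {V : Type*} [Fintype V] {G : SimpleGraph V} [DecidableRel G.Adj] {r : ℕ}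

variable (G) in
def dartEquivAdjPairs : G.Dart ≃ {p : V × V // G.Adj p.1 p.2} where
  toFun d := ⟨d.toProd, d.adj⟩
  invFun p := ⟨p.1, p.2⟩
  left_inv _ := rfl
  right_inv _ := rfl

variable (G) in
theorem card_not_adj_add_two_mul_card_edgeFinset :
    Nat.card {p : V × V // ¬G.Adj p.1 p.2} + 2 * #G.edgeFinset = card V ^ 2 := by
  rw [← dart_card_eq_twice_card_edges, card_congr (dartEquivAdjPairs G), Nat.card_eq_fintype_card,
    card_subtype_compl, Nat.sub_add_cancel (card_subtype_le _), card_prod, sq]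

theorem CliqueFree.two_mul_mul_card_edgeFinset_le (cf : G.CliqueFree (r + 1)) :
    2 * r * #G.edgeFinset ≤ (r - 1) * card V ^ 2 := by
  have hG : #G.edgeFinset ≤ #(turanGraph (card V) r).edgeFinset :=
    cf.card_edgeFinset_le.trans_eq card_edgeFinset_turanGraph.symm
  calc 2 * r * #G.edgeFinset ≤ 2 * r * #(turanGraph (card V) r).edgeFinset := by gcongr
    _ ≤ (r - 1) * card V ^ 2 := mul_card_edgeFinset_turanGraph_le

theorem CliqueFree.sq_card_le_mul_card_not_adj (cf : G.CliqueFree (r + 1)) :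
    card V ^ 2 ≤ r * Nat.card {p : V × V // ¬G.Adj p.1 p.2} := by
  have hcount := card_not_adj_add_two_mul_card_edgeFinset G
  have hturan := cf.two_mul_mul_card_edgeFinset_le
  rcases r with _ | r
  · rw [cliqueFree_one, ← card_eq_zero_iff] at cf
    simp [cf]
  · rw [Nat.add_sub_cancel] at hturan
    nlinarith

end SimpleGraph

/-- In any graph `G` with no clique of size `t` (`t ≥ 2`) on a nonempty finite vertex set,
the probability that two vertices chosen independently and uniformly at random form an
independent set (i.e., are not adjacent) is at least `1/(t-1)`. -/
theorem stmt_0 {V : Type*} [Fintype V] [Nonempty V] (G : SimpleGraph V)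
    (t : ℕ) (ht : 2 ≤ t) (hG : G.CliqueFree t) :
    (1 : ℝ) / ((t : ℝ) - 1) ≤
      (Nat.card {p : V × V // ¬ G.Adj p.1 p.2} : ℝ) / (Nat.card V : ℝ) ^ 2 := by
  classical
  obtain ⟨r, rfl⟩ : ∃ r, t = r + 1 := ⟨t - 1, by omega⟩
  have hr : (0 : ℝ) < r := by exact_mod_cast (by omega : 0 < r)
  have key : (card V : ℝ) ^ 2 ≤ r * Nat.card {p : V × V // ¬ G.Adj p.1 p.2} := by
    exact_mod_cast hG.sq_card_le_mul_card_not_adj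
  rw [Nat.card_eq_fintype_card (α := V), Nat.cast_add_one, add_sub_cancel_right,
    div_le_div_iff₀ hr (by positivity)]
  linarith
end

section
/- In any triangle-free graph G, the probability that three vertices chosen independently and uniformly at random form an independent set is at least 1/4. -/
/-!
Write `A` for the adjacency matrix and `n` for the number of vertices. The number of independent
ordered triples is `∑_{a,b,c} (1 - A a b) (1 - A a c) (1 - A b c)`. Triangle-freeness kills the
cubic term of the expansion, so the count is `n³ - 3 n S + 3 T` with `S = ∑ deg` and `T = ∑ deg²`.
Cauchy–Schwarz gives `S² ≤ n T`, and with `x = S / n²` the probability is at least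
`1 - 3x + 3x² ≥ 1/4`.
-/

open Finset Matrix

theorem Finset.sum_sum_sum_rotate {α M : Type*} [AddCommMonoid M] (s : Finset α)
    (f : α → α → α → M) :
    ∑ a ∈ s, ∑ b ∈ s, ∑ c ∈ s, f a b c = ∑ a ∈ s, ∑ b ∈ s, ∑ c ∈ s, f b c a :=
  (sum_congr rfl fun _ _ ↦ sum_comm).trans sum_comm

theorem Fintype.sum_fin_three_arrow {α M : Type*} [Fintype α] [AddCommMonoid M]
    (g : α → α → α → M) : ∑ f : Fin 3 → α, g (f 0) (f 1) (f 2) = ∑ a, ∑ b, ∑ c, g a b c := by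
  simp only [Fin.isValue, ← (Fin.consEquiv _).sum_comp, Nat.reduceAdd, Fin.consEquiv,
    Equiv.coe_fn_mk, Fin.cons_zero, Fin.cons_one, Fintype.sum_prod_type, univ_unique,
    sum_singleton]
  rfl

theorem cube_div_four_le_cube_sub_add {K : Type*} [Field K] [LinearOrder K] [IsStrictOrderedRing K]
    {n S T : K} (hn : 0 < n) (hST : S ^ 2 ≤ n * T) : n ^ 3 / 4 ≤ n ^ 3 - 3 * n * S + 3 * T := by
  -- `1 - 3x + 3x² - 1/4 = 3 (x - 1/2)²`, homogenised at `x = S / n²`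
  nlinarith [sq_nonneg (n ^ 2 - 2 * S)]

namespace SimpleGraph

variable {V R : Type*} {G : SimpleGraph V}

theorem forall_fin_three_not_adj_iff {f : Fin 3 → V} :
    (∀ i j, ¬G.Adj (f i) (f j)) ↔
      ¬G.Adj (f 0) (f 1) ∧ ¬G.Adj (f 0) (f 2) ∧ ¬G.Adj (f 1) (f 2) := by
  refine ⟨fun h ↦ ⟨h 0 1, h 0 2, h 1 2⟩, fun ⟨h01, h02, h12⟩ i j ↦ ?_⟩
  fin_cases i <;> fin_cases j <;>
    simp_all [G.adj_comm (f 1) (f 0), G.adj_comm (f 2) (f 0), G.adj_comm (f 2) (f 1)]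

variable [DecidableRel G.Adj]

theorem adjMatrix_mul_adjMatrix_mul_adjMatrix_eq_zero [MulZeroOneClass R] (hG : G.CliqueFree 3)
    (a b c : V) : G.adjMatrix R a b * G.adjMatrix R a c * G.adjMatrix R b c = 0 := by
  by_cases hab : G.Adj a b <;> by_cases hac : G.Adj a c <;>
    simp only [adjMatrix_apply, hab, hac, if_true, if_false, zero_mul, one_mul]
  exact if_neg fun hbc ↦
    isIndepSet_neighborSet_of_triangleFree G hG a hab hac (G.ne_of_adj hbc) hbc

variable [Fintype V]

theorem sum_adjMatrix_apply [NonAssocSemiring R] (a : V) :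
    ∑ b, G.adjMatrix R a b = G.degree a := by
  simp [adjMatrix_apply, degree_eq_sum_if_adj]

theorem sum_adjMatrix_apply' [NonAssocSemiring R] (a : V) :
    ∑ b, G.adjMatrix R b a = G.degree a := by
  simp [adjMatrix_apply, degree_eq_sum_if_adj, G.adj_comm _ a]

theorem natCast_card_nonadj_triples_eq_sum [CommRing R] :
    (Nat.card {f : Fin 3 → V // ∀ i j, ¬G.Adj (f i) (f j)} : R) =
      ∑ a, ∑ b, ∑ c,
        (1 - G.adjMatrix R a b) * (1 - G.adjMatrix R a c) * (1 - G.adjMatrix R b c) := by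
  classical
  rw [Nat.card_eq_fintype_card, Fintype.card_subtype, natCast_card_filter]
  simp_rw [forall_fin_three_not_adj_iff]
  rw [← Fintype.sum_fin_three_arrow]
  refine sum_congr rfl fun f _ ↦ ?_
  by_cases h01 : G.Adj (f 0) (f 1) <;> by_cases h02 : G.Adj (f 0) (f 2) <;>
    by_cases h12 : G.Adj (f 1) (f 2) <;> simp [adjMatrix_apply, h01, h02, h12]

theorem sum_one_sub_adjMatrix_mul_mul_eq [CommRing R] (hG : G.CliqueFree 3) :
    ∑ a, ∑ b, ∑ c,
        (1 - G.adjMatrix R a b) * (1 - G.adjMatrix R a c) * (1 - G.adjMatrix R b c) =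
      (Fintype.card V : R) ^ 3 - 3 * Fintype.card V * ∑ a, (G.degree a : R) +
        3 * ∑ a, (G.degree a : R) ^ 2 := by
  set A := G.adjMatrix R
  have expand : ∀ a b c, (1 - A a b) * (1 - A a c) * (1 - A b c) =
      1 - A a b - A a c - A b c + A a b * A a c + A a b * A b c + A a c * A b c := fun a b c ↦ by
    linear_combination -adjMatrix_mul_adjMatrix_mul_adjMatrix_eq_zero (R := R) hG a b c
  -- bring the middle vertex of each path `A x y * A y z` to the outermost sum
  have centre_b : ∑ a : V, ∑ b : V, ∑ c : V, A a b * A b c = ∑ b, ∑ a, ∑ c, A a b * A b c :=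
    sum_comm
  simp only [expand, sum_add_distrib, sum_sub_distrib, centre_b,
    sum_sum_sum_rotate univ fun a b c ↦ A a c * A b c]
  simp only [← sum_mul_sum]
  simp only [sum_const, card_univ, nsmul_eq_mul, ← mul_sum, sum_adjMatrix_apply,
    sum_adjMatrix_apply', sq, A]
  ring

end SimpleGraph

/-- In any triangle-free graph `G` on a nonempty finite vertex set, the probability that
three vertices chosen independently and uniformly at random form an independent set is
at least `1/4`. -/
theorem stmt_2 {V : Type*} [Fintype V] [Nonempty V] (G : SimpleGraph V)
    (hG : G.CliqueFree 3) :
    (1 : ℝ) / 4 ≤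
      (Nat.card {f : Fin 3 → V // ∀ i j, ¬ G.Adj (f i) (f j)} : ℝ) /
        (Nat.card V : ℝ) ^ 3 := by
  classical
  have cauchySchwarz : (∑ v, (G.degree v : ℝ)) ^ 2 ≤ Fintype.card V * ∑ v, (G.degree v : ℝ) ^ 2 :=
    sq_sum_le_card_mul_sum_sq
  have hn : (0 : ℝ) < Fintype.card V := by exact_mod_cast Fintype.card_pos
  rw [Nat.card_eq_fintype_card (α := V), le_div_iff₀ (by positivity),
    G.natCast_card_nonadj_triples_eq_sum, G.sum_one_sub_adjMatrix_mul_mul_eq hG]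
  linarith [cube_div_four_le_cube_sub_add hn cauchySchwarz]
end

section
/- For the complete graph K_2, three independently uniformly random vertices form an independent set with probability exactly 1/4, and K_2 is triangle-free; hence the infimum over triangle-free graphs of this probability equals 1/4. -/
/-!
With `a` the adjacency matrix of `G` on `n` vertices, the number of independent ordered triples
is `∑ (1 - a x y) (1 - a x z) (1 - a y z)`. When `G` has no triangle this expands to
`n³ - 3 n ∑ d + 3 ∑ d²` in terms of the degrees `d`, and Cauchy–Schwarz `(∑ d)² ≤ n ∑ d²` turns
it into at least `n³ / 4 + 3 (∑ d - n² / 2)² / n ≥ n³ / 4`. The bound is attained by `K₂`.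
-/

open Finset

section TripleSums

variable {R V : Type*} [CommRing R] [Fintype V]

lemma sum_sum_sum_mul_eq_sum_sq (a : V → V → R) :
    ∑ x, ∑ y, ∑ z, a x y * a x z = ∑ x, (∑ y, a x y) ^ 2 := by
  simp only [sq, sum_mul_sum]

lemma sum_prod_one_sub_eq_of_symm (a : V → V → R) (hsymm : ∀ x y, a x y = a y x)
    (htri : ∀ x y z, a x y * a x z * a y z = 0) :
    ∑ x, ∑ y, ∑ z, (1 - a x y) * (1 - a x z) * (1 - a y z) =
      (Fintype.card V : R) ^ 3 - 3 * Fintype.card V * ∑ x, ∑ y, a x y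
        + 3 * ∑ x, (∑ y, a x y) ^ 2 := by
  -- each product of two edge terms is written as a cherry centred at its shared vertex
  have expand : ∀ x y z, (1 - a x y) * (1 - a x z) * (1 - a y z) =
      1 - a x y - a x z - a y z + a x y * a x z + a y x * a y z + a z x * a z y := by
    intro x y z
    rw [hsymm y x, hsymm z x, hsymm z y]
    linear_combination -(htri x y z)
  simp only [expand, sum_add_distrib, sum_sub_distrib]
  have edge_xy :
      ∑ x : V, ∑ y : V, ∑ _z : V, a x y = Fintype.card V * ∑ x, ∑ y, a x y := by
    simp [mul_sum]
  have edge_xz :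
      ∑ x : V, ∑ _y : V, ∑ z : V, a x z = Fintype.card V * ∑ x, ∑ y, a x y := by
    simp [mul_sum]
  have edge_yz :
      ∑ _x : V, ∑ y : V, ∑ z : V, a y z = Fintype.card V * ∑ x, ∑ y, a x y := by
    simp
  have cherry_y : ∑ x, ∑ y, ∑ z, a y x * a y z = ∑ x, (∑ y, a x y) ^ 2 := by
    rw [sum_comm, sum_sum_sum_mul_eq_sum_sq]
  have cherry_z : ∑ x, ∑ y, ∑ z, a z x * a z y = ∑ x, (∑ y, a x y) ^ 2 := by
    calc ∑ x, ∑ y, ∑ z, a z x * a z y = ∑ x, ∑ z, ∑ y, a z x * a z y :=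
          sum_congr rfl fun _ _ => sum_comm
      _ = ∑ z, ∑ x, ∑ y, a z x * a z y := sum_comm
      _ = ∑ x, (∑ y, a x y) ^ 2 := sum_sum_sum_mul_eq_sum_sq a
  have cube : ∑ _x : V, ∑ _y : V, ∑ _z : V, (1 : R) = Fintype.card V ^ 3 := by
    simp only [sum_const, card_univ, nsmul_eq_mul, mul_one]
    ring
  rw [cube, edge_xy, edge_xz, edge_yz, sum_sum_sum_mul_eq_sum_sq, cherry_y, cherry_z]
  ring

end TripleSums

@[simps apply]
def tripleEquiv (V : Type*) : (Fin 3 → V) ≃ V × V × V where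
  toFun f := (f 0, f 1, f 2)
  invFun t := ![t.1, t.2.1, t.2.2]
  left_inv f := by ext i; fin_cases i <;> rfl
  right_inv _ := rfl

namespace SimpleGraph

variable {V : Type*} (G : SimpleGraph V)

lemma forall_not_adj_fin_three_iff (f : Fin 3 → V) :
    (∀ i j, ¬ G.Adj (f i) (f j)) ↔
      ¬ G.Adj (f 0) (f 1) ∧ ¬ G.Adj (f 0) (f 2) ∧ ¬ G.Adj (f 1) (f 2) := by
  refine ⟨fun h => ⟨h 0 1, h 0 2, h 1 2⟩, fun ⟨h01, h02, h12⟩ i j => ?_⟩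
  fin_cases i <;> fin_cases j <;>
    simp_all [G.adj_comm (f 1) (f 0), G.adj_comm (f 2) (f 0), G.adj_comm (f 2) (f 1)]

lemma card_indepTriples_eq_sum {R : Type*} [CommRing R] [Fintype V] [DecidableRel G.Adj] :
    (Nat.card {f : Fin 3 → V // ∀ i j, ¬ G.Adj (f i) (f j)} : R) =
      ∑ x, ∑ y, ∑ z,
        (1 - G.adjMatrix R x y) * (1 - G.adjMatrix R x z) * (1 - G.adjMatrix R y z) := by
  classical
  rw [Nat.card_eq_fintype_card, Fintype.card_subtype, card_filter, Nat.cast_sum]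
  simp only [← Fintype.sum_prod_type', ← (tripleEquiv V).sum_comp]
  refine sum_congr rfl fun f _ => ?_
  simp only [forall_not_adj_fin_three_iff, tripleEquiv_apply, adjMatrix_apply]
  split_ifs <;> simp_all

lemma adjMatrix_mul_mul_eq_zero_of_cliqueFree {R : Type*} [MulZeroOneClass R]
    [DecidableRel G.Adj] (hG : G.CliqueFree 3) (x y z : V) :
    G.adjMatrix R x y * G.adjMatrix R x z * G.adjMatrix R y z = 0 := by
  classical
  simp only [adjMatrix_apply]
  split_ifs with hxy hxz hyz <;> simp
  exact (hG _ (is3Clique_triple_iff.2 ⟨hxy, hxz, hyz⟩)).elim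

end SimpleGraph

lemma cube_div_four_le_of_sq_le_mul {n A D : ℝ} (hn : 0 < n) (hAD : A ^ 2 ≤ n * D) :
    n ^ 3 / 4 ≤ n ^ 3 - 3 * n * A + 3 * D := by
  nlinarith [sq_nonneg (A - n ^ 2 / 2)]

theorem SimpleGraph.CliqueFree.one_div_four_le_indepTriple_density {V : Type*} [Fintype V]
    [Nonempty V] {G : SimpleGraph V} (hG : G.CliqueFree 3) :
    1 / 4 ≤ (Nat.card {f : Fin 3 → V // ∀ i j, ¬ G.Adj (f i) (f j)} : ℝ) /
      (Nat.card V : ℝ) ^ 3 := by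
  classical
  have hn : (0 : ℝ) < Fintype.card V := Nat.cast_pos.2 Fintype.card_pos
  have hCS := sq_sum_le_card_mul_sum_sq (s := univ) (f := fun x => ∑ y, G.adjMatrix ℝ x y)
  rw [card_univ] at hCS
  rw [G.card_indepTriples_eq_sum,
    sum_prod_one_sub_eq_of_symm _ (fun x y => G.isSymm_adjMatrix.apply y x)
      (G.adjMatrix_mul_mul_eq_zero_of_cliqueFree hG),
    Nat.card_eq_fintype_card, le_div_iff₀ (by positivity)]
  linarith [cube_div_four_le_of_sq_le_mul hn hCS]

/-- For the complete graph `K_2`, three independently uniformly random vertices form an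
independent set with probability exactly `1/4`, and `K_2` is triangle-free; hence the
infimum over (nonempty finite) triangle-free graphs of this probability equals `1/4`. -/
theorem stmt_3 :
    (Nat.card {f : Fin 3 → Fin 2 //
        ∀ i j, ¬ (⊤ : SimpleGraph (Fin 2)).Adj (f i) (f j)} : ℝ) / (2 : ℝ) ^ 3 = 1 / 4
    ∧ (⊤ : SimpleGraph (Fin 2)).CliqueFree 3
    ∧ sInf {p : ℝ | ∃ (V : Type) (_ : Fintype V) (_ : Nonempty V) (G : SimpleGraph V),
        G.CliqueFree 3 ∧
        p = (Nat.card {f : Fin 3 → V // ∀ i j, ¬ G.Adj (f i) (f j)} : ℝ) /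
              (Nat.card V : ℝ) ^ 3} = 1 / 4 := by
  have hcard : Nat.card {f : Fin 3 → Fin 2 //
      ∀ i j, ¬ (⊤ : SimpleGraph (Fin 2)).Adj (f i) (f j)} = 2 := by
    simp only [Nat.card_eq_fintype_card, SimpleGraph.top_adj]
    decide
  have hK2 : (Nat.card {f : Fin 3 → Fin 2 //
      ∀ i j, ¬ (⊤ : SimpleGraph (Fin 2)).Adj (f i) (f j)} : ℝ) / (2 : ℝ) ^ 3 = 1 / 4 := by
    rw [hcard]; norm_num
  have hfree : (⊤ : SimpleGraph (Fin 2)).CliqueFree 3 :=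
    SimpleGraph.cliqueFree_of_card_lt (by simp)
  refine ⟨hK2, hfree, IsLeast.csInf_eq ⟨⟨Fin 2, inferInstance, inferInstance, ⊤, hfree, ?_⟩, ?_⟩⟩
  · rw [Nat.card_fin, ← hK2]; norm_num
  · rintro p ⟨V, _, _, G, hG, rfl⟩
    exact hG.one_div_four_le_indepTriple_density
end

section
/- Define N(s,t) for integers s ≥ 1, t ≥ 2 by N(s,t) = 1 if s = 1 or t = 2, and N(s,t) = min over x ∈ [0,1] of max(x^s · N(s,t-1), (1-x)^{s-1} · N(s-1,t)) otherwise. Then for every y ∈ [0,1], N(s,t) ≥ (1-y)^{s(s-1)/2} · y^{s(t-2)}. -/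
/-!
For any `x ∈ [0,1]` either `y ≤ x` or `1 - y ≤ 1 - x`, so for every fixed `y ∈ [0,1]`
`N(s,t) ≥ min (y^s N(s,t-1)) ((1-y)^{s-1} N(s-1,t))`. Induction then closes the bound:
`y^s` times the bound for `(s,t-1)` is exactly the claimed bound, and `(1-y)^{s-1}` times the
bound for `(s-1,t)` dominates it, because `s(s-1)/2 = (s-1)(s-2)/2 + (s-1)`.
-/

/-- The function `N(s,t)`: `N(s,t) = 1` if `s ≤ 1` or `t ≤ 2`, and otherwise
`N(s,t) = min_{x ∈ [0,1]} max (x^s N(s,t-1)) ((1-x)^{s-1} N(s-1,t))`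
(the minimum written as an infimum, which is attained by continuity). -/
noncomputable def N : ℕ → ℕ → ℝ
  | 0, _ => 1
  | 1, _ => 1
  | _ + 2, 0 => 1
  | _ + 2, 1 => 1
  | _ + 2, 2 => 1
  | s + 2, t + 3 => sInf {y : ℝ | ∃ x ∈ Set.Icc (0 : ℝ) 1,
      y = max (x ^ (s + 2) * N (s + 2) (t + 2)) ((1 - x) ^ (s + 1) * N (s + 1) (t + 3))}
  termination_by s t => (s, t)

open Set

lemma one_sub_pow_mul_pow_le_one {y : ℝ} (hy : y ∈ Icc (0 : ℝ) 1) (a b : ℕ) :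
    (1 - y) ^ a * y ^ b ≤ 1 :=
  mul_le_one₀ (pow_le_one₀ (by linarith [hy.2]) (by linarith [hy.1])) (pow_nonneg hy.1 _)
    (pow_le_one₀ hy.1 hy.2)

lemma min_pow_mul_le_max_pow_mul {x y A B : ℝ} (hy : y ∈ Icc (0 : ℝ) 1) (hA : 0 ≤ A)
    (hB : 0 ≤ B) (a b : ℕ) :
    min (y ^ a * A) ((1 - y) ^ b * B) ≤ max (x ^ a * A) ((1 - x) ^ b * B) := by
  rcases le_total y x with hyx | hxy
  · exact (min_le_left _ _).trans <| le_max_of_le_left <|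
      mul_le_mul_of_nonneg_right (pow_le_pow_left₀ hy.1 hyx a) hA
  · exact (min_le_right _ _).trans <| le_max_of_le_right <|
      mul_le_mul_of_nonneg_right (pow_le_pow_left₀ (by linarith [hy.2]) (by linarith) b) hB

lemma N_nonneg (s t : ℕ) : 0 ≤ N s t := by
  induction s, t using N.induct with
  | case6 s t ih₁ _ =>
    rw [N]
    refine Real.sInf_nonneg ?_
    rintro _ ⟨x, hx, rfl⟩
    exact le_max_of_le_left (mul_nonneg (pow_nonneg hx.1 _) ih₁)
  | _ => simp [N]

lemma min_le_N {y : ℝ} (hy : y ∈ Icc (0 : ℝ) 1) (s t : ℕ) :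
    min (y ^ (s + 2) * N (s + 2) (t + 2)) ((1 - y) ^ (s + 1) * N (s + 1) (t + 3)) ≤
      N (s + 2) (t + 3) := by
  rw [N]
  refine le_csInf ⟨_, 0, ⟨le_rfl, zero_le_one⟩, rfl⟩ ?_
  rintro _ ⟨x, -, rfl⟩
  exact min_pow_mul_le_max_pow_mul hy (N_nonneg _ _) (N_nonneg _ _) _ _

theorem stmt_9_general (s t : ℕ) (y : ℝ) (hy : y ∈ Set.Icc (0 : ℝ) 1) :
    (1 - y) ^ (s * (s - 1) / 2) * y ^ (s * (t - 2)) ≤ N s t := by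
  induction s, t using N.induct with
  | case6 s t ih₁ ih₂ =>
    have hy₀ : 0 ≤ y := hy.1
    have hy₁ : 0 ≤ 1 - y := by linarith [hy.2]
    simp only [Nat.succ_eq_add_one, Nat.add_sub_cancel] at ih₁ ih₂ ⊢
    refine le_trans (le_min ?_ ?_) (min_le_N hy s t)
    · calc (1 - y) ^ ((s + 2) * (s + 1) / 2) * y ^ ((s + 2) * (t + 1))
          = y ^ (s + 2) * ((1 - y) ^ ((s + 2) * (s + 1) / 2) * y ^ ((s + 2) * t)) := by ring
        _ ≤ y ^ (s + 2) * N (s + 2) (t + 2) := mul_le_mul_of_nonneg_left ih₁ (by positivity)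
    · calc (1 - y) ^ ((s + 2) * (s + 1) / 2) * y ^ ((s + 2) * (t + 1))
          ≤ (1 - y) ^ ((s + 2) * (s + 1) / 2) * y ^ ((s + 1) * (t + 1)) :=
            mul_le_mul_of_nonneg_left (pow_le_pow_of_le_one hy₀ hy.2 (by nlinarith))
              (by positivity)
        _ = (1 - y) ^ (s + 1) * ((1 - y) ^ ((s + 1) * s / 2) * y ^ ((s + 1) * (t + 1))) := by
            rw [show (s + 2) * (s + 1) / 2 = (s + 1) * s / 2 + (s + 1) from
              Nat.triangle_succ (s + 1)]
            ring
        _ ≤ (1 - y) ^ (s + 1) * N (s + 1) (t + 3) := mul_le_mul_of_nonneg_left ih₂ (by positivity)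
  | _ => rw [N]; exact one_sub_pow_mul_pow_le_one hy _ _

/-- For integers `s ≥ 1`, `t ≥ 2` and every `y ∈ [0,1]`,
`N(s,t) ≥ (1-y)^{s(s-1)/2} · y^{s(t-2)}`. -/
theorem stmt_9 (s t : ℕ) (hs : 1 ≤ s) (ht : 2 ≤ t) (y : ℝ) (hy : y ∈ Set.Icc (0 : ℝ) 1) :
    (1 - y) ^ (s * (s - 1) / 2) * y ^ (s * (t - 2)) ≤ N s t :=
  stmt_9_general s t y hy
end

section
/- With N(s,t) as defined recursively, N(s,t) ≥ ( ((s-1)/2 + t - 2)^{(s-1)/2 + t - 2} / ( ((s-1)/2)^{(s-1)/2} · (t-2)^{t-2} ) )^{-s} for s ≥ 2, t ≥ 3. -/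
lemma le_N_of_forall_le_max {s t : ℕ} {c : ℝ}
    (h : ∀ x ∈ Set.Icc (0 : ℝ) 1,
      c ≤ max (x ^ (s + 2) * N (s + 2) (t + 2)) ((1 - x) ^ (s + 1) * N (s + 1) (t + 3))) :
    c ≤ N (s + 2) (t + 3) := by
  rw [N]
  refine le_csInf ⟨_, 0, ⟨le_rfl, zero_le_one⟩, rfl⟩ ?_
  rintro _ ⟨x, hx, rfl⟩
  exact h x hx

lemma one_sub_pow_mul_pow_le_one_s10 {y : ℝ} (hy0 : 0 ≤ y) (hy1 : y ≤ 1) (m n : ℕ) :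
    (1 - y) ^ m * y ^ n ≤ 1 :=
  mul_le_one₀ (pow_le_one₀ (by linarith) (by linarith)) (pow_nonneg hy0 n) (pow_le_one₀ hy0 hy1)

theorem one_sub_pow_mul_pow_le_N {y : ℝ} (hy0 : 0 ≤ y) (hy1 : y ≤ 1) :
    ∀ s t : ℕ, (1 - y) ^ s.choose 2 * y ^ (s * (t - 2)) ≤ N s t
  | 0, _ | 1, _ | _ + 2, 0 | _ + 2, 1 | _ + 2, 2 => by
      rw [N]; exact one_sub_pow_mul_pow_le_one_s10 hy0 hy1 _ _
  | s + 2, t + 3 => le_N_of_forall_le_max fun x ⟨_, hx1⟩ => by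
      have ih_left := one_sub_pow_mul_pow_le_N hy0 hy1 (s + 2) (t + 2)
      have ih_right := one_sub_pow_mul_pow_le_N hy0 hy1 (s + 1) (t + 3)
      simp only [Nat.add_sub_cancel] at ih_left ih_right ⊢
      rcases le_total y x with hyx | hxy
      · refine le_max_of_le_left ?_
        calc (1 - y) ^ (s + 2).choose 2 * y ^ ((s + 2) * (t + 1))
            = y ^ (s + 2) * ((1 - y) ^ (s + 2).choose 2 * y ^ ((s + 2) * t)) := by ring
          _ ≤ x ^ (s + 2) * N (s + 2) (t + 2) :=
            mul_le_mul (pow_le_pow_left₀ hy0 hyx _) ih_left (by positivity) (by positivity)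
      · have hy : 0 ≤ 1 - y := by linarith
        refine le_max_of_le_right ?_
        calc (1 - y) ^ (s + 2).choose 2 * y ^ ((s + 2) * (t + 1))
            = (1 - y) ^ (s + 1) * ((1 - y) ^ (s + 1).choose 2 * y ^ ((s + 2) * (t + 1))) := by
              rw [Nat.choose_succ_succ', Nat.choose_one_right, pow_add]; ring
          _ ≤ (1 - y) ^ (s + 1) * ((1 - y) ^ (s + 1).choose 2 * y ^ ((s + 1) * (t + 1))) := by
              gcongr _ * (_ * ?_)
              exact pow_le_pow_of_le_one hy0 hy1 (by gcongr; omega)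
          _ ≤ (1 - x) ^ (s + 1) * N (s + 1) (t + 3) :=
            mul_le_mul (pow_le_pow_left₀ hy (by linarith) _) ih_right (by positivity)
              (pow_nonneg (by linarith) _)
  termination_by s t => (s, t)

lemma add_rpow_add_div_rpow_mul_rpow_rpow_neg {a b : ℝ} (ha : 0 < a) (hb : 0 < b) (r : ℝ) :
    ((a + b) ^ (a + b) / (a ^ a * b ^ b)) ^ (-r) =
      (a / (a + b)) ^ (a * r) * (b / (a + b)) ^ (b * r) := by
  have hab : 0 < a + b := add_pos ha hb
  have hinv : ((a + b) ^ (a + b) / (a ^ a * b ^ b))⁻¹ = (a / (a + b)) ^ a * (b / (a + b)) ^ b := by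
    rw [Real.div_rpow ha.le hab.le, Real.div_rpow hb.le hab.le, Real.rpow_add hab]
    field_simp
  rw [Real.rpow_neg (by positivity), ← Real.inv_rpow (by positivity), hinv,
    Real.mul_rpow (by positivity) (by positivity), ← Real.rpow_mul (by positivity),
    ← Real.rpow_mul (by positivity)]

/-- For `s ≥ 2`, `t ≥ 3`,
`N(s,t) ≥ ( ((s-1)/2 + t-2)^{(s-1)/2 + t-2} / ( ((s-1)/2)^{(s-1)/2} (t-2)^{t-2} ) )^{-s}`,
with real exponents (`rpow`, convention `0^0 = 1`). -/
theorem stmt_10 (s t : ℕ) (hs : 2 ≤ s) (ht : 3 ≤ t) :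
    ((((s : ℝ) - 1) / 2 + (t : ℝ) - 2) ^ (((s : ℝ) - 1) / 2 + (t : ℝ) - 2) /
        ((((s : ℝ) - 1) / 2) ^ (((s : ℝ) - 1) / 2) * ((t : ℝ) - 2) ^ ((t : ℝ) - 2)))
      ^ (-(s : ℝ)) ≤ N s t := by
  have hs' : (2 : ℝ) ≤ s := by exact_mod_cast hs
  have ht' : (3 : ℝ) ≤ t := by exact_mod_cast ht
  set a : ℝ := ((s : ℝ) - 1) / 2 with ha
  set b : ℝ := (t : ℝ) - 2 with hb
  have ha0 : 0 < a := by linarith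
  have hb0 : 0 < b := by linarith
  have h_one_sub : 1 - b / (a + b) = a / (a + b) := by field_simp; ring
  have hexp_a : a * s = (s.choose 2 : ℕ) := by rw [Nat.cast_choose_two]; ring
  have hexp_b : b * s = (s * (t - 2) : ℕ) := by push_cast [Nat.cast_sub (by omega : 2 ≤ t)]; ring
  rw [show a + (t : ℝ) - 2 = a + b by ring, add_rpow_add_div_rpow_mul_rpow_rpow_neg ha0 hb0,
    ← h_one_sub, hexp_a, hexp_b, Real.rpow_natCast, Real.rpow_natCast]
  exact one_sub_pow_mul_pow_le_N (by positivity)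
    (div_le_one_of_le₀ (by linarith) (by positivity)) s t
end

section
/- With P(s,t) as above, P(s,t) ≥ min_{x∈[0,1]} max( x^s · P(s, t-1), (1-x)^{s-1} · P(s-1, t) ). -/
/-- `P s t` is the infimum, over all finite nonempty graphs `G` with no clique of size
`t`, of the probability that `s` independently uniformly chosen vertices of `G` form an
independent set. -/
noncomputable def P (s t : ℕ) : ℝ :=
  sInf {p : ℝ | ∃ (V : Type) (_ : Fintype V) (_ : Nonempty V) (G : SimpleGraph V),
    G.CliqueFree t ∧
    p = (Nat.card {f : Fin s → V // ∀ i j, ¬ G.Adj (f i) (f j)} : ℝ) /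
          (Nat.card V : ℝ) ^ s}

/-! Let `v₀` have maximum degree `d` in an `n`-vertex `K_{t+1}`-free graph and take `x = d / n`.
The neighbourhood of `v₀` induces a `K_t`-free graph on `d` vertices, hence carries at least
`P(s,t) d^s` independent `s`-tuples. The non-neighbourhood of any vertex `v` (which contains `v`)
induces a `K_{t+1}`-free graph on at least `n - d` vertices, and putting `v` in front of any of its
independent `(s-1)`-tuples gives an independent `s`-tuple; summing over `v` gives at least
`P(s-1,t+1) n (n-d)^{s-1}` of them. -/

namespace SimpleGraph

variable {V : Type*} (G : SimpleGraph V)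

abbrev IndepTuple (s : ℕ) : Type _ := {f : Fin s → V // ∀ i j, ¬ G.Adj (f i) (f j)}

variable {G}

theorem CliqueFree.induce {n : ℕ} (h : G.CliqueFree n) (W : Set V) :
    (G.induce W).CliqueFree n :=
  (G.cliqueFree_induce_iff W n).2 h.cliqueFreeOn

theorem CliqueFree.induce_neighborSet {n : ℕ} (h : G.CliqueFree (n + 1)) (v : V) :
    (G.induce (G.neighborSet v)).CliqueFree n := by
  rw [cliqueFree_induce_iff, ← Set.univ_inter (G.neighborSet v)]
  exact (G.cliqueFreeOn_univ.2 h).of_succ G (Set.mem_univ v)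

variable (G) [Finite V]

theorem card_indepTuple_le_card_pow (s : ℕ) : Nat.card (G.IndepTuple s) ≤ Nat.card V ^ s :=
  (Nat.card_le_card_of_injective _ Subtype.val_injective).trans_eq (by simp [Nat.card_fun])

theorem card_indepTuple_induce_le (W : Set V) (s : ℕ) :
    Nat.card ((G.induce W).IndepTuple s) ≤ Nat.card (G.IndepTuple s) :=
  Nat.card_le_card_of_injective (fun g => ⟨fun i => g.1 i, g.2⟩) fun g₁ g₂ h => by
    ext i
    exact congrFun (congrArg Subtype.val h) i

theorem sum_card_indepTuple_induce_compl_neighborSet_le [Fintype V] (s : ℕ) :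
    ∑ v, Nat.card ((G.induce (G.neighborSet v)ᶜ).IndepTuple s) ≤
      Nat.card (G.IndepTuple (s + 1)) := by
  rw [← Nat.card_sigma]
  refine Nat.card_le_card_of_injective
    (fun p => ⟨Fin.cons p.1 fun i => p.2.1 i, fun i j => ?_⟩) ?_
  · refine Fin.cases (Fin.cases G.irrefl (fun j => (p.2.1 j).2) j) (fun i => ?_) i
    exact Fin.cases (fun h => (p.2.1 i).2 h.symm) (fun j => p.2.2 i j) j
  · rintro ⟨v, g⟩ ⟨w, g'⟩ h
    obtain rfl : v = w := by simpa using congrFun (congrArg Subtype.val h) 0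
    refine Sigma.ext rfl (heq_of_eq (Subtype.ext (funext fun i => Subtype.ext ?_)))
    simpa using congrFun (congrArg Subtype.val h) i.succ

end SimpleGraph

open SimpleGraph

theorem P_nonneg (s t : ℕ) : 0 ≤ P s t :=
  Real.sInf_nonneg <| by
    rintro _ ⟨V, _, _, G, -, rfl⟩
    positivity

theorem P_le_card_indepTuple_div {V : Type} [Fintype V] [Nonempty V] {G : SimpleGraph V}
    {t : ℕ} (hG : G.CliqueFree t) (s : ℕ) :
    P s t ≤ Nat.card (G.IndepTuple s) / (Nat.card V : ℝ) ^ s :=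
  csInf_le ⟨0, by rintro _ ⟨V, _, _, G, -, rfl⟩; positivity⟩ ⟨V, ‹_›, ‹_›, G, hG, rfl⟩

theorem P_mul_card_pow_le {V : Type} [Fintype V] [Nonempty V] {G : SimpleGraph V}
    {t : ℕ} (hG : G.CliqueFree t) (s : ℕ) :
    P s t * Nat.card V ^ s ≤ Nat.card (G.IndepTuple s) :=
  (le_div_iff₀ (pow_pos (Nat.cast_pos.2 Nat.card_pos) s)).1 (P_le_card_indepTuple_div hG s)

theorem P_eq_zero_of_le_one (s : ℕ) {t : ℕ} (ht : t ≤ 1) : P s t = 0 := by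
  unfold P
  convert Real.sInf_empty
  refine Set.eq_empty_of_forall_notMem ?_
  rintro _ ⟨V, _, ⟨v⟩, G, hG, -⟩
  exact hG.mono ht {v} ⟨by simp, by simp⟩

theorem P_le_one (s t : ℕ) : P s t ≤ 1 := by
  rcases le_or_gt t 1 with ht | ht
  · exact (P_eq_zero_of_le_one s ht).trans_le zero_le_one
  · refine (P_le_card_indepTuple_div (G := (⊥ : SimpleGraph Unit)) (cliqueFree_bot ht) s).trans ?_
    simpa using (⊥ : SimpleGraph Unit).card_indepTuple_le_card_pow s

theorem P_mul_degree_pow_le {V : Type} [Fintype V] {G : SimpleGraph V} [DecidableRel G.Adj]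
    {t : ℕ} (hG : G.CliqueFree (t + 1)) {v : V} (hv : 0 < G.degree v) (s : ℕ) :
    P s t * G.degree v ^ s ≤ Nat.card (G.IndepTuple s) := by
  have : Nonempty (G.neighborSet v) :=
    Fintype.card_pos_iff.1 (by rwa [card_neighborSet_eq_degree])
  calc P s t * G.degree v ^ s = P s t * Nat.card (G.neighborSet v) ^ s := by
        rw [Nat.card_eq_fintype_card, card_neighborSet_eq_degree]
    _ ≤ Nat.card ((G.induce (G.neighborSet v)).IndepTuple s) :=
        P_mul_card_pow_le (hG.induce_neighborSet v) s
    _ ≤ Nat.card (G.IndepTuple s) := by exact_mod_cast G.card_indepTuple_induce_le _ s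

theorem P_mul_card_mul_pow_le {V : Type} [Fintype V] {G : SimpleGraph V} [DecidableRel G.Adj]
    {t : ℕ} (hG : G.CliqueFree t) {v₀ : V} (hmax : ∀ v, G.degree v ≤ G.degree v₀) (s : ℕ) :
    P s t * (Nat.card V * (Nat.card V - G.degree v₀ : ℝ) ^ s) ≤
      Nat.card (G.IndepTuple (s + 1)) := by
  classical
  have hcompl (v : V) : (Nat.card V - G.degree v₀ : ℝ) ≤ Nat.card ↥(G.neighborSet v)ᶜ := by
    rw [Nat.card_eq_fintype_card, Nat.card_eq_fintype_card, Fintype.card_compl_set,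
      card_neighborSet_eq_degree, Nat.cast_sub (G.degree_lt_card_verts v).le]
    gcongr
    exact hmax v
  have hv (v : V) : P s t * (Nat.card V - G.degree v₀ : ℝ) ^ s ≤
      Nat.card ((G.induce (G.neighborSet v)ᶜ).IndepTuple s) := by
    have : Nonempty ↥(G.neighborSet v)ᶜ := ⟨⟨v, G.irrefl⟩⟩
    refine le_trans ?_ (P_mul_card_pow_le (hG.induce _) s)
    have hd : (G.degree v₀ : ℝ) ≤ Nat.card V := by
      rw [Nat.card_eq_fintype_card]
      exact_mod_cast (G.degree_lt_card_verts v₀).le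
    exact mul_le_mul_of_nonneg_left (pow_le_pow_left₀ (sub_nonneg.2 hd) (hcompl v) s)
      (P_nonneg s t)
  calc P s t * (Nat.card V * (Nat.card V - G.degree v₀ : ℝ) ^ s)
      = ∑ _v : V, P s t * (Nat.card V - G.degree v₀ : ℝ) ^ s := by
        rw [Finset.sum_const, Finset.card_univ, nsmul_eq_mul, Nat.card_eq_fintype_card]
        ring
    _ ≤ ∑ v, (Nat.card ((G.induce (G.neighborSet v)ᶜ).IndepTuple s) : ℝ) :=
        Finset.sum_le_sum fun v _ => hv v
    _ ≤ Nat.card (G.IndepTuple (s + 1)) := by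
        exact_mod_cast G.sum_card_indepTuple_induce_compl_neighborSet_le s

theorem exists_max_le_card_indepTuple_div {V : Type} [Fintype V] [Nonempty V]
    {G : SimpleGraph V} {t : ℕ} (hG : G.CliqueFree (t + 1)) (s : ℕ) :
    ∃ x ∈ Set.Icc (0 : ℝ) 1, max (x ^ s * P s t) ((1 - x) ^ (s - 1) * P (s - 1) (t + 1)) ≤
      Nat.card (G.IndepTuple s) / (Nat.card V : ℝ) ^ s := by
  classical
  rcases s with _ | s
  · have hone : Nat.card (G.IndepTuple 0) = 1 :=
      Nat.card_eq_one_iff_unique.2 ⟨inferInstance, ⟨⟨finZeroElim, finZeroElim⟩⟩⟩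
    refine ⟨0, by simp, ?_⟩
    rw [hone]
    simpa using max_le (P_le_one 0 t) (P_le_one 0 (t + 1))
  obtain ⟨v₀, hmax⟩ := Finite.exists_max fun v => G.degree v
  set n : ℝ := (Nat.card V : ℝ)
  set d : ℝ := (G.degree v₀ : ℝ)
  have hn : 0 < n := Nat.cast_pos.2 Nat.card_pos
  have hn' : n ≠ 0 := hn.ne'
  have hd : d < n := by
    show (G.degree v₀ : ℝ) < Nat.card V
    rw [Nat.card_eq_fintype_card]
    exact_mod_cast G.degree_lt_card_verts v₀
  refine ⟨d / n, ⟨by positivity, (div_le_one hn).2 hd.le⟩, ?_⟩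
  rw [le_div_iff₀ (by positivity), max_mul_of_nonneg _ _ (by positivity)]
  refine max_le ?_ ?_
  · rcases (G.degree v₀).eq_zero_or_pos with h0 | hpos
    · simp [d, h0]
    · calc (d / n) ^ (s + 1) * P (s + 1) t * n ^ (s + 1)
            = P (s + 1) t * (d / n * n) ^ (s + 1) := by ring
        _ = P (s + 1) t * d ^ (s + 1) := by rw [div_mul_cancel₀ d hn']
        _ ≤ _ := P_mul_degree_pow_le hG hpos _
  · calc (1 - d / n) ^ (s + 1 - 1) * P (s + 1 - 1) (t + 1) * n ^ (s + 1)
        = P s (t + 1) * (n * ((1 - d / n) ^ s * n ^ s)) := by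
          rw [Nat.add_sub_cancel]
          ring
      _ = P s (t + 1) * (n * (n - d) ^ s) := by
        rw [← mul_pow, sub_mul, one_mul, div_mul_cancel₀ d hn']
      _ ≤ _ := P_mul_card_mul_pow_le hG hmax s

/-- Neighborhood recursion:
`P(s,t) ≥ min_{x ∈ [0,1]} max (x^s · P(s,t-1)) ((1-x)^{s-1} · P(s-1,t))`,
the minimum written as an infimum. -/
theorem stmt_14 (s t : ℕ) :
    sInf {y : ℝ | ∃ x ∈ Set.Icc (0 : ℝ) 1,
        y = max (x ^ s * P s (t - 1)) ((1 - x) ^ (s - 1) * P (s - 1) t)} ≤ P s t := by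
  set S := {y : ℝ | ∃ x ∈ Set.Icc (0 : ℝ) 1,
        y = max (x ^ s * P s (t - 1)) ((1 - x) ^ (s - 1) * P (s - 1) t)}
  have hS : BddBelow S := ⟨0, by
    rintro _ ⟨x, hx, rfl⟩
    exact (mul_nonneg (pow_nonneg hx.1 s) (P_nonneg s (t - 1))).trans (le_max_left _ _)⟩
  rcases le_or_gt t 1 with ht | ht
  · have hzero : (0 : ℝ) ∈ S := ⟨0, by simp, by
      simp [P_eq_zero_of_le_one _ ht, P_eq_zero_of_le_one _ (t.sub_le 1 |>.trans ht)]⟩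
    rw [P_eq_zero_of_le_one s ht]
    exact csInf_le hS hzero
  obtain ⟨t, rfl⟩ : ∃ t', t = t' + 1 := ⟨t - 1, by omega⟩
  refine le_csInf ⟨_, Unit, inferInstance, inferInstance, ⊥, cliqueFree_bot ht, rfl⟩ ?_
  rintro _ ⟨V, _, _, G, hG, rfl⟩
  obtain ⟨x, hx, hle⟩ := exists_max_le_card_indepTuple_div hG s
  exact (csInf_le hS ⟨x, hx, by rw [Nat.add_sub_cancel]⟩).trans hle
end
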